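/- arXiv:2406.00774 — 5 statements merged into one kernel-verified Lean document; each statement's English description precedes it below -/
import Mathlib

section
/- Let p ∈ (1,∞), q = p/(p−1), p* = max{p,q}. Let A ∈ ℂ^{d×d}, b, c ∈ ℂ^d, V ≥ 0 real, Λ > 0 and μ ∈ (0,1]. Suppose |⟨Aξ,σ⟩| ≤ Λ|ξ||σ| for all ξ, σ ∈ ℂ^d and Γ_p^{(A,b,c,V)}(ξ) ≥ μ(|ξ|² + V) for all ξ ∈ ℂ^d. Then |b + 𝒥_p c|² ≤ 4(1−μ)((p*−1)Λ − μ)·V. -/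
open scoped ComplexConjugate

/-- The ℝ-linear operator `𝒥_p ξ = (p/2)(ξ + (1 − 2/p)·conj ξ)` on `ℂ^d`. -/
noncomputable def Jmap (p : ℝ) {d : ℕ} (ξ : EuclideanSpace ℂ (Fin d)) :
    EuclideanSpace ℂ (Fin d) :=
  WithLp.toLp 2 (fun i => (p / 2 : ℂ) * (ξ i + ((1 - 2 / p : ℝ) : ℂ) * conj (ξ i)))

/-- The Hermitian inner product `⟨x,y⟩ = ∑ x i * conj (y i)`, linear in the first variable. -/
noncomputable def hip {d : ℕ} (x y : EuclideanSpace ℂ (Fin d)) : ℂ :=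
  @inner ℂ _ _ y x

/-- A matrix acting on `ℂ^d`. -/
noncomputable def mulVecE {d : ℕ} (A : Matrix (Fin d) (Fin d) ℂ)
    (ξ : EuclideanSpace ℂ (Fin d)) : EuclideanSpace ℂ (Fin d) :=
  WithLp.toLp 2 (fun i => A.mulVec (fun j => ξ j) i)

/-- `Γ_p^{(A,b,c,V)}(ξ) = Re⟨Aξ, 𝒥_p ξ⟩ + Re⟨b + 𝒥_p c, ξ⟩ + V`. -/
noncomputable def Gamma (p : ℝ) {d : ℕ} (A : Matrix (Fin d) (Fin d) ℂ)
    (b c : EuclideanSpace ℂ (Fin d)) (V : ℝ) (ξ : EuclideanSpace ℂ (Fin d)) : ℝ :=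
  (hip (mulVecE A ξ) (Jmap p ξ)).re + (hip (b + Jmap p c) ξ).re + V

/-!
Write `w = b + 𝒥_p c` and `K = (p* − 1)Λ`. Since `‖𝒥_p‖ ≤ p/2 + |p/2 − 1| ≤ p* − 1`, the bound on `A`
gives `Re⟨Aξ, 𝒥_p ξ⟩ ≤ K|ξ|²`, so the coercivity of `Γ_p` yields
`Re⟨w, ξ⟩ ≥ −(K − μ)|ξ|² − (1 − μ)V` for every `ξ`. Testing this along the line `ξ = t e`, where `e`
is a unit vector with `Re⟨w, e⟩ = |w|`, gives a real quadratic in `t` that is everywhere nonnegative,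
and its discriminant is `|w|² − 4(K − μ)(1 − μ)V ≤ 0`.
-/

open scoped InnerProductSpace

section InnerProductSpace

variable {𝕜 E : Type*} [RCLike 𝕜] [NormedAddCommGroup E] [InnerProductSpace 𝕜 E] [Nontrivial E]

lemma exists_norm_eq_one_re_inner_eq_norm (w : E) :
    ∃ e : E, ‖e‖ = 1 ∧ RCLike.re ⟪e, w⟫_𝕜 = ‖w‖ := by
  by_cases hw : w = 0
  · obtain ⟨x, hx⟩ := exists_ne (0 : E)
    exact ⟨(‖x‖⁻¹ : 𝕜) • x, by simp [norm_smul, hx], by simp [hw]⟩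
  · refine ⟨(‖w‖⁻¹ : 𝕜) • w, by simp [norm_smul, hw], ?_⟩
    rw [inner_smul_left, inner_self_eq_norm_sq_to_K, map_inv₀, RCLike.conj_ofReal, ← map_pow,
      ← RCLike.ofReal_inv, RCLike.re_ofReal_mul, RCLike.ofReal_re]
    field_simp [norm_ne_zero_iff.mpr hw]

lemma norm_sq_le_of_forall_neg_le_re_inner {w : E} {a γ : ℝ}
    (h : ∀ ξ : E, -(a * ‖ξ‖ ^ 2) - γ ≤ RCLike.re ⟪ξ, w⟫_𝕜) : ‖w‖ ^ 2 ≤ 4 * a * γ := by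
  obtain ⟨e, he, hew⟩ := exists_norm_eq_one_re_inner_eq_norm (𝕜 := 𝕜) w
  have hquad : ∀ t : ℝ, 0 ≤ a * (t * t) + ‖w‖ * t + γ := fun t => by
    have ht := h ((t : 𝕜) • e)
    rw [inner_smul_left, RCLike.conj_ofReal, RCLike.re_ofReal_mul, hew, norm_smul, he,
      RCLike.norm_ofReal, mul_one, sq_abs] at ht
    linarith
  have hdisc := discrim_le_zero hquad
  rw [discrim] at hdisc
  linarith

end InnerProductSpace

section Jmap

variable {d : ℕ}

noncomputable def conjVec (ξ : EuclideanSpace ℂ (Fin d)) : EuclideanSpace ℂ (Fin d) :=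
  WithLp.toLp 2 fun i => conj (ξ i)

lemma norm_conjVec (ξ : EuclideanSpace ℂ (Fin d)) : ‖conjVec ξ‖ = ‖ξ‖ := by
  simp [EuclideanSpace.norm_eq, conjVec]

lemma Jmap_eq_smul_add_smul_conjVec {p : ℝ} (hp : p ≠ 0) (ξ : EuclideanSpace ℂ (Fin d)) :
    Jmap p ξ = ((p / 2 : ℝ) : ℂ) • ξ + ((p / 2 - 1 : ℝ) : ℂ) • conjVec ξ := by
  ext i
  simp only [Jmap, conjVec, PiLp.add_apply, PiLp.smul_apply, smul_eq_mul]
  have hpC : (p : ℂ) ≠ 0 := Complex.ofReal_ne_zero.mpr hp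
  push_cast
  field_simp

lemma norm_Jmap_le {p : ℝ} (hp : 0 < p) (ξ : EuclideanSpace ℂ (Fin d)) :
    ‖Jmap p ξ‖ ≤ (p / 2 + |p / 2 - 1|) * ‖ξ‖ := by
  rw [Jmap_eq_smul_add_smul_conjVec hp.ne']
  calc _ ≤ ‖((p / 2 : ℝ) : ℂ) • ξ‖ + ‖((p / 2 - 1 : ℝ) : ℂ) • conjVec ξ‖ := norm_add_le _ _
    _ = (p / 2 + |p / 2 - 1|) * ‖ξ‖ := by
      rw [norm_smul, norm_smul, norm_conjVec, Complex.norm_real, Complex.norm_real,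
        Real.norm_of_nonneg (by positivity), Real.norm_eq_abs, add_mul]

lemma half_add_abs_half_sub_one_le {p : ℝ} (hp : 1 < p) :
    p / 2 + |p / 2 - 1| ≤ max p (p / (p - 1)) - 1 := by
  rcases le_total 2 p with h | h
  · rw [abs_of_nonneg (by linarith)]
    linarith [le_max_left p (p / (p - 1))]
  · rw [abs_of_nonpos (by linarith)]
    have hq : 2 ≤ p / (p - 1) := by rw [le_div_iff₀ (by linarith)]; linarith
    linarith [le_max_right p (p / (p - 1))]

lemma re_hip_mulVecE_Jmap_le {p M Λ : ℝ} {A : Matrix (Fin d) (Fin d) ℂ} (hΛ : 0 ≤ Λ)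
    (hJ : ∀ ξ : EuclideanSpace ℂ (Fin d), ‖Jmap p ξ‖ ≤ M * ‖ξ‖)
    (hbdd : ∀ ξ σ : EuclideanSpace ℂ (Fin d), ‖hip (mulVecE A ξ) σ‖ ≤ Λ * ‖ξ‖ * ‖σ‖)
    (ξ : EuclideanSpace ℂ (Fin d)) :
    (hip (mulVecE A ξ) (Jmap p ξ)).re ≤ M * Λ * ‖ξ‖ ^ 2 :=
  calc _ ≤ ‖hip (mulVecE A ξ) (Jmap p ξ)‖ := Complex.re_le_norm _
    _ ≤ Λ * ‖ξ‖ * ‖Jmap p ξ‖ := hbdd ξ _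
    _ ≤ Λ * ‖ξ‖ * (M * ‖ξ‖) := by gcongr; exact hJ ξ
    _ = M * Λ * ‖ξ‖ ^ 2 := by ring

end Jmap

theorem stmt2_general (d : ℕ) (hd : 1 ≤ d) (p q pstar : ℝ) (hp : 1 < p)
    (hq : q = p / (p - 1)) (hpstar : pstar = max p q)
    (A : Matrix (Fin d) (Fin d) ℂ) (b c : EuclideanSpace ℂ (Fin d))
    (V Λ μ : ℝ) (hΛ : 0 < Λ)
    (hbdd : ∀ ξ σ : EuclideanSpace ℂ (Fin d), ‖hip (mulVecE A ξ) σ‖ ≤ Λ * ‖ξ‖ * ‖σ‖)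
    (hΓ : ∀ ξ : EuclideanSpace ℂ (Fin d), μ * (‖ξ‖ ^ 2 + V) ≤ Gamma p A b c V ξ) :
    ‖b + Jmap p c‖ ^ 2 ≤ 4 * (1 - μ) * ((pstar - 1) * Λ - μ) * V := by
  have hJ (ξ : EuclideanSpace ℂ (Fin d)) : ‖Jmap p ξ‖ ≤ (pstar - 1) * ‖ξ‖ :=
    (norm_Jmap_le (by linarith) ξ).trans <| by
      gcongr
      exact hpstar ▸ hq ▸ half_add_abs_half_sub_one_le hp
  have : NeZero d := ⟨by omega⟩
  refine (norm_sq_le_of_forall_neg_le_re_inner (𝕜 := ℂ) (a := (pstar - 1) * Λ - μ)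
    (γ := (1 - μ) * V) fun ξ => ?_).trans_eq (by ring)
  have hA := re_hip_mulVecE_Jmap_le hΛ.le hJ hbdd ξ
  have hΓξ := hΓ ξ
  simp only [Gamma, hip] at hA hΓξ
  rw [RCLike.re_to_complex]
  linarith

theorem stmt2 (d : ℕ) (hd : 1 ≤ d) (p q pstar : ℝ) (hp : 1 < p)
    (hq : q = p / (p - 1)) (hpstar : pstar = max p q)
    (A : Matrix (Fin d) (Fin d) ℂ) (b c : EuclideanSpace ℂ (Fin d))
    (V Λ μ : ℝ) (hV : 0 ≤ V) (hΛ : 0 < Λ) (hμ0 : 0 < μ) (hμ1 : μ ≤ 1)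
    (hbdd : ∀ ξ σ : EuclideanSpace ℂ (Fin d), ‖hip (mulVecE A ξ) σ‖ ≤ Λ * ‖ξ‖ * ‖σ‖)
    (hΓ : ∀ ξ : EuclideanSpace ℂ (Fin d), μ * (‖ξ‖ ^ 2 + V) ≤ Gamma p A b c V ξ) :
    ‖b + Jmap p c‖ ^ 2 ≤ 4 * (1 - μ) * ((pstar - 1) * Λ - μ) * V :=
  stmt2_general d hd p q pstar hp hq hpstar A b c V Λ μ hΛ hbdd hΓ
end

section
/- Let p ∈ (1,∞), q = p/(p−1), A ∈ ℂ^{d×d} with conjugate transpose A*, and b, c ∈ ℂ^d. Then for every ξ ∈ ℂ^d: Re⟨A*ξ, 𝒥_q ξ⟩ = Re⟨A(𝒥_q ξ), 𝒥_p(𝒥_q ξ)⟩ and Re⟨c + 𝒥_q b, ξ⟩ = Re⟨b + 𝒥_p c, 𝒥_q ξ⟩. -/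
/-!
In coordinates, `𝒥_p z = (p - 1) Re z + i Im z` for `p ≠ 0`. Hence each `𝒥_r` is symmetric for the
real inner product `Re⟨·,·⟩`, and `𝒥_p ∘ 𝒥_q = id` as soon as `(p - 1)(q - 1) = 1`, which is
what `q = p/(p - 1)` says. The first identity is then `Re⟨A*ξ, η⟩ = Re⟨Aη, ξ⟩` at `η = 𝒥_q ξ`,
the second is symmetry of `𝒥_q` and `𝒥_p` followed by `𝒥_p 𝒥_q ξ = ξ`.
-/

open scoped ComplexConjugate

lemma mulVecE_eq_toEuclideanLin {d : ℕ} (A : Matrix (Fin d) (Fin d) ℂ)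
    (ξ : EuclideanSpace ℂ (Fin d)) :
    mulVecE A ξ = Matrix.toEuclideanLin A ξ := rfl

lemma hip_mulVecE_conjTranspose {d : ℕ} (A : Matrix (Fin d) (Fin d) ℂ)
    (x y : EuclideanSpace ℂ (Fin d)) :
    hip (mulVecE A.conjTranspose x) y = conj (hip (mulVecE A y) x) := by
  simp only [hip, mulVecE_eq_toEuclideanLin, Matrix.toEuclideanLin_conjTranspose_eq_adjoint,
    LinearMap.adjoint_inner_right, inner_conj_symm]

lemma hip_add_left {d : ℕ} (x y z : EuclideanSpace ℂ (Fin d)) :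
    hip (x + y) z = hip x z + hip y z :=
  inner_add_right _ _ _

lemma re_hip_eq_sum {d : ℕ} (x y : EuclideanSpace ℂ (Fin d)) :
    (hip x y).re = ∑ i, ((x i).re * (y i).re + (x i).im * (y i).im) := by
  simp [hip, PiLp.inner_apply, Complex.re_sum, Complex.mul_re]

lemma Jmap_apply_re {p : ℝ} (hp : p ≠ 0) {d : ℕ} (ξ : EuclideanSpace ℂ (Fin d)) (i : Fin d) :
    (Jmap p ξ i).re = (p - 1) * (ξ i).re := by
  rw [Jmap, PiLp.toLp_apply, ← Complex.ofReal_ofNat, ← Complex.ofReal_div, Complex.re_ofReal_mul,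
    Complex.add_re, Complex.re_ofReal_mul, Complex.conj_re]
  field_simp
  ring

lemma Jmap_apply_im {p : ℝ} (hp : p ≠ 0) {d : ℕ} (ξ : EuclideanSpace ℂ (Fin d)) (i : Fin d) :
    (Jmap p ξ i).im = (ξ i).im := by
  rw [Jmap, PiLp.toLp_apply, ← Complex.ofReal_ofNat, ← Complex.ofReal_div, Complex.im_ofReal_mul,
    Complex.add_im, Complex.im_ofReal_mul, Complex.conj_im]
  field_simp
  ring

lemma Jmap_Jmap {p q : ℝ} (hp₀ : p ≠ 0) (hp₁ : p ≠ 1) (hq : q = p / (p - 1)) {d : ℕ}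
    (ξ : EuclideanSpace ℂ (Fin d)) : Jmap p (Jmap q ξ) = ξ := by
  have hq₀ : q ≠ 0 := hq ▸ div_ne_zero hp₀ (sub_ne_zero.mpr hp₁)
  have hpq : (p - 1) * (q - 1) = 1 := by
    rw [hq]
    field_simp [sub_ne_zero.mpr hp₁]
    ring
  ext i
  apply Complex.ext
  · rw [Jmap_apply_re hp₀, Jmap_apply_re hq₀, ← mul_assoc, hpq, one_mul]
  · rw [Jmap_apply_im hp₀, Jmap_apply_im hq₀]

lemma re_hip_Jmap_left {d : ℕ} (r : ℝ) (x y : EuclideanSpace ℂ (Fin d)) :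
    (hip (Jmap r x) y).re = (hip x (Jmap r y)).re := by
  rcases eq_or_ne r 0 with rfl | hr
  · have hJ₀ (ξ : EuclideanSpace ℂ (Fin d)) : Jmap 0 ξ = 0 := by ext; simp [Jmap]
    simp [hJ₀, hip]
  simp only [re_hip_eq_sum, Jmap_apply_re hr, Jmap_apply_im hr]
  exact Finset.sum_congr rfl fun i _ => by ring

theorem stmt7_general (d : ℕ) (p q : ℝ) (hp : 1 < p) (hq : q = p / (p - 1))
    (A : Matrix (Fin d) (Fin d) ℂ) (b c : EuclideanSpace ℂ (Fin d)) :
    ∀ ξ : EuclideanSpace ℂ (Fin d),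
      (hip (mulVecE A.conjTranspose ξ) (Jmap q ξ)).re =
        (hip (mulVecE A (Jmap q ξ)) (Jmap p (Jmap q ξ))).re ∧
      (hip (c + Jmap q b) ξ).re = (hip (b + Jmap p c) (Jmap q ξ)).re := by
  intro ξ
  have hJ : Jmap p (Jmap q ξ) = ξ := Jmap_Jmap (by positivity) hp.ne' hq ξ
  constructor
  · rw [hJ, hip_mulVecE_conjTranspose, Complex.conj_re]
  · rw [hip_add_left, hip_add_left, Complex.add_re, Complex.add_re, re_hip_Jmap_left,
      re_hip_Jmap_left, hJ, add_comm]

theorem stmt7 (d : ℕ) (hd : 1 ≤ d) (p q : ℝ) (hp : 1 < p) (hq : q = p / (p - 1))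
    (A : Matrix (Fin d) (Fin d) ℂ) (b c : EuclideanSpace ℂ (Fin d)) :
    ∀ ξ : EuclideanSpace ℂ (Fin d),
      (hip (mulVecE A.conjTranspose ξ) (Jmap q ξ)).re =
        (hip (mulVecE A (Jmap q ξ)) (Jmap p (Jmap q ξ))).re ∧
      (hip (c + Jmap q b) ξ).re = (hip (b + Jmap p c) (Jmap q ξ)).re :=
  stmt7_general d p q hp hq A b c
end

section
/- Let p, r ∈ (1,∞) with p ≠ r, let V > 0 be a real number and let B ∈ ℂ^{d×d}. Then there exist b, c ∈ ℂ^d such that: (a) b + 𝒥_p c = 0, so that for every A ∈ ℂ^{d×d} and δ > 0 with Re⟨Aξ, 𝒥_p ξ⟩ ≥ δ|ξ|² for all ξ, one has Γ_p^{(A,b,c,V)}(ξ) ≥ min{δ,1}(|ξ|² + V) for all ξ ∈ ℂ^d; and (b) there exists ξ ∈ ℂ^d with Γ_r^{(B,b,c,V)}(ξ) < 0. (Explicitly, one may take b = −(p−1)v − i(p/2)v and c = v + i(p/2)v for a suitable v ∈ ℝ^d with |v| large, so that b + 𝒥_r c = (r−p)v.) -/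
/-!
For a real vector `c` one has `𝒥_p c = (p - 1) c`, so `b := -𝒥_p c` kills the drift term of
`Γ_p`, whereas the drift term of `Γ_r` becomes `Re⟨(r - p) c, ξ⟩`. Coercivity of `A` then gives (a)
directly, and for (b) one fixes a unit vector `e` and takes `c` a real multiple of `e`, so large that
the drift term `(r - p) Re⟨c, e⟩` beats `Re⟨B e, 𝒥_r e⟩ + V`.
-/

open scoped ComplexConjugate

lemma Jmap_single_ofReal {p : ℝ} (hp : p ≠ 0) {d : ℕ} (i : Fin d) (s : ℝ) :
    Jmap p (EuclideanSpace.single i (s : ℂ)) = EuclideanSpace.single i (((p - 1) * s : ℝ) : ℂ) := by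
  ext j
  by_cases hj : j = i
  · subst hj
    simp only [Jmap, PiLp.single_apply, if_true, Complex.conj_ofReal]
    have hp' : (p : ℂ) ≠ 0 := by exact_mod_cast hp
    push_cast
    field_simp
    ring
  · simp [Jmap, hj]

lemma re_hip_single_single {d : ℕ} (i : Fin d) (z : ℂ) :
    (hip (EuclideanSpace.single i z) (EuclideanSpace.single i 1)).re = z.re := by
  simp [hip, EuclideanSpace.inner_single_left]

lemma Gamma_of_add_Jmap_eq_zero {p : ℝ} {d : ℕ} {A : Matrix (Fin d) (Fin d) ℂ}
    {b c : EuclideanSpace ℂ (Fin d)} (h : b + Jmap p c = 0) (V : ℝ) (ξ : EuclideanSpace ℂ (Fin d)) :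
    Gamma p A b c V ξ = (hip (mulVecE A ξ) (Jmap p ξ)).re + V := by
  simp [Gamma, h, hip]

lemma Gamma_neg_Jmap (p r : ℝ) {d : ℕ} (B : Matrix (Fin d) (Fin d) ℂ)
    (c : EuclideanSpace ℂ (Fin d)) (V : ℝ) (ξ : EuclideanSpace ℂ (Fin d)) :
    Gamma r B (-Jmap p c) c V ξ =
      (hip (mulVecE B ξ) (Jmap r ξ)).re + (hip (Jmap r c - Jmap p c) ξ).re + V := by
  rw [Gamma, neg_add_eq_sub]

lemma min_one_mul_add_le {δ x y V : ℝ} (hx : 0 ≤ x) (hV : 0 ≤ V) (h : δ * x ≤ y) :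
    min δ 1 * (x + V) ≤ y + V := by
  nlinarith [min_le_left δ 1, min_le_right δ 1]

theorem stmt10 (d : ℕ) (hd : 1 ≤ d) (p r : ℝ) (hp : 1 < p) (hr : 1 < r) (hpr : p ≠ r)
    (V : ℝ) (hV : 0 < V) (B : Matrix (Fin d) (Fin d) ℂ) :
    ∃ b c : EuclideanSpace ℂ (Fin d),
      (b + Jmap p c = 0 ∧
        ∀ (A : Matrix (Fin d) (Fin d) ℂ) (δ : ℝ), 0 < δ →
          (∀ ξ : EuclideanSpace ℂ (Fin d), δ * ‖ξ‖ ^ 2 ≤ (hip (mulVecE A ξ) (Jmap p ξ)).re) →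
          ∀ ξ : EuclideanSpace ℂ (Fin d), min δ 1 * (‖ξ‖ ^ 2 + V) ≤ Gamma p A b c V ξ) ∧
      ∃ ξ : EuclideanSpace ℂ (Fin d), Gamma r B b c V ξ < 0 := by
  let i : Fin d := ⟨0, hd⟩
  let e : EuclideanSpace ℂ (Fin d) := EuclideanSpace.single i 1
  let q : ℝ := (hip (mulVecE B e) (Jmap r e)).re
  obtain ⟨s, hs⟩ : ∃ s : ℝ, q + (r - p) * s + V < 0 :=
    ⟨-(q + V + 1) / (r - p), by field_simp [sub_ne_zero.mpr hpr.symm]; linarith⟩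
  let c : EuclideanSpace ℂ (Fin d) := EuclideanSpace.single i (s : ℂ)
  refine ⟨-Jmap p c, c, ⟨neg_add_cancel _, fun A δ _ hA ξ => ?_⟩, e, ?_⟩
  · rw [Gamma_of_add_Jmap_eq_zero (neg_add_cancel _)]
    exact min_one_mul_add_le (sq_nonneg _) hV.le (hA ξ)
  · have hdrift : Jmap r c - Jmap p c = EuclideanSpace.single i (((r - p) * s : ℝ) : ℂ) := by
      rw [Jmap_single_ofReal (by linarith), Jmap_single_ofReal (by linarith),
        ← PiLp.single_sub]
      congr 1
      push_cast
      ring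
    rw [Gamma_neg_Jmap, hdrift, re_hip_single_single, Complex.ofReal_re]
    exact hs
end

section
/- Let μ ∈ (0,1], M > 0, Λ > 0, A ∈ ℂ^{d×d}, b, c ∈ ℂ^d and V ≥ 0 a real number. Suppose |⟨Aξ,σ⟩| ≤ Λ|ξ||σ| for all ξ, σ ∈ ℂ^d, |b − c| ≤ M√V, and Re⟨Aξ,ξ⟩ + Re⟨b+c,ξ⟩ + V ≥ μ(|ξ|² + V) for all ξ ∈ ℂ^d. Then for every ξ ∈ ℂ^d: |Im⟨Aξ,ξ⟩ + Im⟨b−c,ξ⟩| ≤ ((Λ + M/2)/μ)·(Re⟨Aξ,ξ⟩ + Re⟨b+c,ξ⟩ + V). In particular, the complex numbers (Re⟨Aξ,ξ⟩ + Re⟨b+c,ξ⟩ + V) + i(Im⟨Aξ,ξ⟩ + Im⟨b−c,ξ⟩), ξ ∈ ℂ^d, lie in a closed sector of half-angle θ₀ < π/2 depending only on μ, M, Λ. -/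
open scoped ComplexConjugate

theorem stmt15 (d : ℕ) (hd : 1 ≤ d) (μ M Λ : ℝ) (hμ0 : 0 < μ) (hμ1 : μ ≤ 1)
    (hM : 0 < M) (hΛ : 0 < Λ)
    (A : Matrix (Fin d) (Fin d) ℂ) (b c : EuclideanSpace ℂ (Fin d))
    (V : ℝ) (hV : 0 ≤ V)
    (hbdd : ∀ ξ σ : EuclideanSpace ℂ (Fin d),
      ‖hip (mulVecE A ξ) σ‖ ≤ Λ * ‖ξ‖ * ‖σ‖)
    (hbc : ‖b - c‖ ≤ M * Real.sqrt V)
    (hacc : ∀ ξ : EuclideanSpace ℂ (Fin d),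
      μ * (‖ξ‖ ^ 2 + V) ≤ (hip (mulVecE A ξ) ξ).re + (hip (b + c) ξ).re + V) :
    ∀ ξ : EuclideanSpace ℂ (Fin d),
      |(hip (mulVecE A ξ) ξ).im + (hip (b - c) ξ).im| ≤
        ((Λ + M / 2) / μ) * ((hip (mulVecE A ξ) ξ).re + (hip (b + c) ξ).re + V) := by
  intro ξ
  have h1 : |(hip (mulVecE A ξ) ξ).im| ≤ Λ * ‖ξ‖ * ‖ξ‖ :=
    (Complex.abs_im_le_norm _).trans (hbdd ξ ξ)
  have h2 : |(hip (b - c) ξ).im| ≤ ‖b - c‖ * ‖ξ‖ := by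
    refine (Complex.abs_im_le_norm _).trans ?_
    rw [hip]
    exact (norm_inner_le_norm ξ (b - c)).trans (le_of_eq (mul_comm _ _))
  have hsq : Real.sqrt V * ‖ξ‖ ≤ (V + ‖ξ‖ ^ 2) / 2 := by
    nlinarith [sq_nonneg (Real.sqrt V - ‖ξ‖), Real.sq_sqrt hV]
  have hnb : (0:ℝ) ≤ ‖ξ‖ := norm_nonneg _
  have hsV : (0:ℝ) ≤ Real.sqrt V := Real.sqrt_nonneg _
  have h3 : |(hip (b - c) ξ).im| ≤ M / 2 * (V + ‖ξ‖ ^ 2) := by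
    have := mul_le_mul_of_nonneg_right hbc hnb
    nlinarith
  have hR := hacc ξ
  set R := (hip (mulVecE A ξ) ξ).re + (hip (b + c) ξ).re + V with hRdef
  have hRnn : 0 ≤ R := le_trans (by positivity) hR
  have key : |(hip (mulVecE A ξ) ξ).im + (hip (b - c) ξ).im| ≤
      (Λ + M / 2) * (‖ξ‖ ^ 2 + V) := by
    refine (abs_add_le _ _).trans ?_
    nlinarith
  refine key.trans ?_
  rw [div_mul_eq_mul_div, le_div_iff₀ hμ0]
  calc (Λ + M / 2) * (‖ξ‖ ^ 2 + V) * μ = (Λ + M / 2) * (μ * (‖ξ‖ ^ 2 + V)) := by ring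
    _ ≤ (Λ + M / 2) * R := by
        exact mul_le_mul_of_nonneg_left hR (by positivity)
end

section
/- Let r ∈ (1,∞), δ > 0, K ≥ 0, μ ∈ (0, min{δ,1}] and ε ∈ (0, μ). Let A ∈ ℂ^{d×d}, b, c ∈ ℂ^d and V ≥ 0 a real number. Suppose Re⟨Aξ, 𝒥_r ξ⟩ ≥ δ|ξ|² for all ξ ∈ ℂ^d, |b + 𝒥_r c| ≤ K, and Γ_r^{(A,b,c,V)}(ξ) ≥ μ(|ξ|² + V) for all ξ ∈ ℂ^d. Then for every real m ≥ K²/(4(δ−μ+ε)(1−μ+ε)) one has Γ_r^{(A,b,c,min{V,m})}(ξ) ≥ (μ−ε)(|ξ|² + min{V,m}) for all ξ ∈ ℂ^d. -/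
open scoped ComplexConjugate

/-! In the truncated region `m ≤ V`, coercivity of `A` and `|b + 𝒥_r c| ≤ K` give
`Γ ≥ δ|ξ|² - K|ξ| + m`, and the lower bound on `m` is exactly the condition that the
quadratic `(δ - μ + ε) t² - K t + (1 - μ + ε) m` has non-positive discriminant.
Where `V ≤ m` nothing is truncated and the hypothesis on `Γ` applies directly. -/

theorem quadratic_nonneg_of_sq_le_four_mul {a b c : ℝ} (ha : 0 < a) (hb : b ^ 2 ≤ 4 * a * c)
    (t : ℝ) : 0 ≤ a * t ^ 2 - b * t + c := by
  have hsq : 4 * a * (a * t ^ 2 - b * t + c) = (2 * a * t - b) ^ 2 + (4 * a * c - b ^ 2) := by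
    ring
  nlinarith [sq_nonneg (2 * a * t - b)]

theorem neg_norm_mul_norm_le_re_hip {d : ℕ} (v ξ : EuclideanSpace ℂ (Fin d)) :
    -(‖v‖ * ‖ξ‖) ≤ (hip v ξ).re := by
  have h := re_inner_le_norm (𝕜 := ℂ) ξ (-v)
  rw [inner_neg_right, map_neg, norm_neg, RCLike.re_to_complex] at h
  unfold hip
  linarith [mul_comm ‖v‖ ‖ξ‖]

theorem Gamma_ge_of_coercive {p δ K : ℝ} {d : ℕ} {A : Matrix (Fin d) (Fin d) ℂ}
    {b c : EuclideanSpace ℂ (Fin d)}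
    (hA : ∀ ξ : EuclideanSpace ℂ (Fin d), δ * ‖ξ‖ ^ 2 ≤ (hip (mulVecE A ξ) (Jmap p ξ)).re)
    (hbc : ‖b + Jmap p c‖ ≤ K) (V : ℝ) (ξ : EuclideanSpace ℂ (Fin d)) :
    δ * ‖ξ‖ ^ 2 - K * ‖ξ‖ + V ≤ Gamma p A b c V ξ := by
  have hdrift : -(K * ‖ξ‖) ≤ (hip (b + Jmap p c) ξ).re :=
    le_trans (neg_le_neg (mul_le_mul_of_nonneg_right hbc (norm_nonneg ξ)))
      (neg_norm_mul_norm_le_re_hip _ ξ)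
  unfold Gamma
  linarith [hA ξ]

theorem stmt19_general (d : ℕ) (r δ K μ ε : ℝ)
    (hμ : μ ≤ min δ 1) (hε0 : 0 < ε)
    (A : Matrix (Fin d) (Fin d) ℂ) (b c : EuclideanSpace ℂ (Fin d))
    (V : ℝ) (hV : 0 ≤ V)
    (hA : ∀ ξ : EuclideanSpace ℂ (Fin d), δ * ‖ξ‖ ^ 2 ≤ (hip (mulVecE A ξ) (Jmap r ξ)).re)
    (hbc : ‖b + Jmap r c‖ ≤ K)
    (hΓ : ∀ ξ : EuclideanSpace ℂ (Fin d), μ * (‖ξ‖ ^ 2 + V) ≤ Gamma r A b c V ξ) :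
    ∀ m : ℝ, K ^ 2 / (4 * (δ - μ + ε) * (1 - μ + ε)) ≤ m →
      ∀ ξ : EuclideanSpace ℂ (Fin d),
        (μ - ε) * (‖ξ‖ ^ 2 + min V m) ≤ Gamma r A b c (min V m) ξ := by
  intro m hm ξ
  have ha : 0 < δ - μ + ε := by linarith [min_le_left δ 1]
  have hc : 0 < 1 - μ + ε := by linarith [min_le_right δ 1]
  rcases le_total V m with hVm | hmV
  · rw [min_eq_left hVm]
    calc (μ - ε) * (‖ξ‖ ^ 2 + V) ≤ μ * (‖ξ‖ ^ 2 + V) :=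
          mul_le_mul_of_nonneg_right (by linarith) (by positivity)
      _ ≤ Gamma r A b c V ξ := hΓ ξ
  · rw [min_eq_right hmV]
    have hdiscr : K ^ 2 ≤ 4 * (δ - μ + ε) * ((1 - μ + ε) * m) := by
      rw [div_le_iff₀ (by positivity)] at hm; linarith
    have hquad := quadratic_nonneg_of_sq_le_four_mul ha hdiscr ‖ξ‖
    linarith [Gamma_ge_of_coercive hA hbc m ξ]

theorem stmt19 (d : ℕ) (hd : 1 ≤ d) (r δ K μ ε : ℝ) (hr : 1 < r) (hδ : 0 < δ)
    (hK : 0 ≤ K) (hμ0 : 0 < μ) (hμ : μ ≤ min δ 1) (hε0 : 0 < ε) (hε : ε < μ)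
    (A : Matrix (Fin d) (Fin d) ℂ) (b c : EuclideanSpace ℂ (Fin d))
    (V : ℝ) (hV : 0 ≤ V)
    (hA : ∀ ξ : EuclideanSpace ℂ (Fin d), δ * ‖ξ‖ ^ 2 ≤ (hip (mulVecE A ξ) (Jmap r ξ)).re)
    (hbc : ‖b + Jmap r c‖ ≤ K)
    (hΓ : ∀ ξ : EuclideanSpace ℂ (Fin d), μ * (‖ξ‖ ^ 2 + V) ≤ Gamma r A b c V ξ) :
    ∀ m : ℝ, K ^ 2 / (4 * (δ - μ + ε) * (1 - μ + ε)) ≤ m →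
      ∀ ξ : EuclideanSpace ℂ (Fin d),
        (μ - ε) * (‖ξ‖ ^ 2 + min V m) ≤ Gamma r A b c (min V m) ξ :=
  stmt19_general d r δ K μ ε hμ hε0 A b c V hV hA hbc hΓ
end
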